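/- The graph Θ(θ,2f+1) is an f-faulty-degree (1+ε)-spanner for S with at most |𝒞|·(2f+1)·n edges: for every edge set F of Θ(θ,2f+1) of maximum degree at most f and all points p, q ∈ S, the shortest-path distance between p and q in Θ(θ,2f+1) \ F is at most (1+ε) times the shortest-path distance between p and q in K_S \ F, provided 1/(cos θ − sin θ) ≤ 1+ε. -/
import Mathlib


open Real

/-- Length of a walk in a graph whose vertices lie in a metric space:
the sum of the metric distances of consecutive vertices. -/
noncomputable def wlen {V : Type*} [PseudoMetricSpace V] {G : SimpleGraph V} {u v : V}
    (w : G.Walk u v) : ℝ :=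
  (w.darts.map fun d : G.Dart => dist d.toProd.1 d.toProd.2).sum

/-- Shortest-path distance between two vertices of a metrically weighted graph. -/
noncomputable def gdist {V : Type*} [PseudoMetricSpace V] (G : SimpleGraph V) (p q : V) : ℝ :=
  sInf {l : ℝ | ∃ w : G.Walk p q, wlen w = l}

/-- The set `F` of edges, viewed as a graph, has maximum degree at most `f`. -/
def maxDegLe {V : Type*} (F : Set (Sym2 V)) (f : ℕ) : Prop :=
  ∀ v : V, {e | e ∈ F ∧ v ∈ e}.encard ≤ (f : ℕ∞)

/-- The set of points of `S`, as a type. -/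
abbrev Pts {d : ℕ} (S : Finset (EuclideanSpace ℝ (Fin d))) : Type :=
  {x : EuclideanSpace ℝ (Fin d) // x ∈ S}

lemma wlen_nonneg {V : Type*} [PseudoMetricSpace V] {G : SimpleGraph V} {u v : V}
    (w : G.Walk u v) : 0 ≤ wlen w := by
  apply List.sum_nonneg
  intro x hx
  simp only [List.mem_map] at hx
  obtain ⟨d, -, rfl⟩ := hx
  exact dist_nonneg

lemma wlen_nil {V : Type*} [PseudoMetricSpace V] {G : SimpleGraph V} {u : V} :
    wlen (SimpleGraph.Walk.nil : G.Walk u u) = 0 := by simp [wlen]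

lemma wlen_cons {V : Type*} [PseudoMetricSpace V] {G : SimpleGraph V} {u v x : V}
    (h : G.Adj u v) (w : G.Walk v x) :
    wlen (SimpleGraph.Walk.cons h w) = dist u v + wlen w := by
  simp [wlen]

lemma wlen_append {V : Type*} [PseudoMetricSpace V] {G : SimpleGraph V} {u v x : V}
    (w1 : G.Walk u v) (w2 : G.Walk v x) :
    wlen (w1.append w2) = wlen w1 + wlen w2 := by
  simp [wlen, SimpleGraph.Walk.darts_append]

lemma gdist_le_wlen {V : Type*} [PseudoMetricSpace V] {G : SimpleGraph V} {p q : V}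
    (w : G.Walk p q) : gdist G p q ≤ wlen w := by
  refine csInf_le ⟨0, ?_⟩ ⟨w, rfl⟩
  rintro l ⟨w', rfl⟩
  exact wlen_nonneg w'

open InnerProductGeometry in
open RealInnerProductSpace in
lemma theta_geom {E : Type*} [NormedAddCommGroup E] [InnerProductSpace ℝ E]
    {θ : ℝ} (hθ0 : 0 < θ) (hθ1 : θ < π / 4)
    {u a b : E} (hu : ‖u‖ = 1) (ha : a ≠ 0) (hb : b ≠ 0)
    (hau : angle a u ≤ θ) (hbu : angle b u ≤ θ) (hab : angle a b ≤ θ)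
    (hproj : |⟪a, u⟫| ≤ |⟪b, u⟫|) :
    ‖b - a‖ ≤ ‖b‖ - (Real.cos θ - Real.sin θ) * ‖a‖ := by
  have hπ : (0:ℝ) < π := Real.pi_pos
  have hθπ2 : θ < π / 2 := by linarith [Real.pi_pos]
  have hcos : 0 < Real.cos θ := Real.cos_pos_of_mem_Ioo ⟨by linarith, hθπ2⟩
  have hsin : 0 < Real.sin θ := Real.sin_pos_of_pos_of_lt_pi hθ0 (by linarith)
  have hθπ : θ ≤ π := by linarith
  have hna : 0 < ‖a‖ := norm_pos_iff.2 ha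
  have hnb : 0 < ‖b‖ := norm_pos_iff.2 hb
  have key : ∀ x y : E, x ≠ 0 → y ≠ 0 → angle x y ≤ θ →
      ‖x‖ * ‖y‖ * Real.cos θ ≤ ⟪x, y⟫ := by
    intro x y hx hy hxy
    have h1 : Real.cos θ ≤ Real.cos (angle x y) :=
      Real.cos_le_cos_of_nonneg_of_le_pi (angle_nonneg x y) hθπ hxy
    rw [InnerProductGeometry.cos_angle] at h1
    have hx' : 0 < ‖x‖ := norm_pos_iff.2 hx
    have hy' : 0 < ‖y‖ := norm_pos_iff.2 hy
    calc ‖x‖ * ‖y‖ * Real.cos θ ≤ ‖x‖ * ‖y‖ * (⟪x,y⟫ / (‖x‖ * ‖y‖)) := by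
          apply mul_le_mul_of_nonneg_left h1 (by positivity)
      _ = ⟪x,y⟫ := by field_simp
  have hau' : ‖a‖ * Real.cos θ ≤ ⟪a, u⟫ := by
    have := key a u ha (by intro h; rw [h] at hu; simp at hu) hau
    rwa [hu, mul_one] at this
  have hbu' : ‖b‖ * Real.cos θ ≤ ⟪b, u⟫ := by
    have := key b u hb (by intro h; rw [h] at hu; simp at hu) hbu
    rwa [hu, mul_one] at this
  have hab' : ‖a‖ * ‖b‖ * Real.cos θ ≤ ⟪a, b⟫ := key a b ha hb hab
  have hiau : 0 < ⟪a, u⟫ := lt_of_lt_of_le (by positivity) hau'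
  have hibu : 0 < ⟪b, u⟫ := lt_of_lt_of_le (by positivity) hbu'
  have hproj' : ⟪a, u⟫ ≤ ⟪b, u⟫ := by
    rwa [abs_of_pos hiau, abs_of_pos hibu] at hproj
  have hCS : ⟪b, u⟫ ≤ ‖b‖ := by
    have := real_inner_le_norm b u; rwa [hu, mul_one] at this
  have hab2 : ‖a‖ * Real.cos θ ≤ ‖b‖ := le_trans hau' (le_trans hproj' hCS)
  set c : ℝ := Real.cos θ - Real.sin θ with hc
  have hrhs : 0 ≤ ‖b‖ - c * ‖a‖ := by
    have : c * ‖a‖ ≤ Real.cos θ * ‖a‖ := by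
      apply mul_le_mul_of_nonneg_right (by simp [hc]; linarith) (le_of_lt hna)
    linarith [mul_comm (Real.cos θ) ‖a‖]
  have hsq : ‖b - a‖ ^ 2 ≤ (‖b‖ - c * ‖a‖) ^ 2 := by
    have hexp : ‖b - a‖ ^ 2 = ‖b‖ ^ 2 - 2 * ⟪a, b⟫ + ‖a‖ ^ 2 := by
      rw [norm_sub_sq_real, real_inner_comm]
    have htrig : Real.sin θ ^ 2 + Real.cos θ ^ 2 = 1 := Real.sin_sq_add_cos_sq θ
    rw [hexp, hc]
    nlinarith [mul_le_mul_of_nonneg_left hab2 (by positivity : (0:ℝ) ≤ 2 * Real.sin θ * ‖a‖),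
      hab', hna.le, hsin.le, hnb.le, hcos.le]
  nlinarith [norm_nonneg (b - a), hrhs, hsq]

open RealInnerProductSpace in
theorem stmt14 {d k : ℕ} (f : ℕ) (θ : ℝ) (hθ0 : 0 < θ) (hθ1 : θ < π / 4)
    -- a collection of k cones with apex at the origin, angular diameter at most θ,
    -- covering ℝ^d, each equipped with a unit ray direction contained in the cone
    (cone : Fin k → Set (EuclideanSpace ℝ (Fin d)))
    (hcone : ∀ i, ∀ x ∈ cone i, ∀ t : ℝ, 0 ≤ t → t • x ∈ cone i)
    (hang : ∀ i, ∀ x ∈ cone i, x ≠ 0 → ∀ y ∈ cone i, y ≠ 0 →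
      InnerProductGeometry.angle x y ≤ θ)
    (hcover : ∀ x : EuclideanSpace ℝ (Fin d), ∃ i, x ∈ cone i)
    (u : Fin k → EuclideanSpace ℝ (Fin d)) (hu : ∀ i, ‖u i‖ = 1)
    (hray : ∀ i, ∀ t : ℝ, 0 ≤ t → t • u i ∈ cone i)
    (S : Finset (EuclideanSpace ℝ (Fin d)))
    -- for each p and each cone, N p i is the set of min(2f+1, |S_{p,C}|) points of
    -- S_{p,C} whose orthogonal projections onto ℓ_C + p are closest to p
    (N : Pts S → Fin k → Set (EuclideanSpace ℝ (Fin d)))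
    (hNsub : ∀ p i, N p i ⊆ {x | x ∈ S ∧ x ≠ ↑p ∧ x - ↑p ∈ cone i})
    (hNcard : ∀ p i, (N p i).ncard =
      min (2 * f + 1) {x | x ∈ S ∧ x ≠ ↑p ∧ x - ↑p ∈ cone i}.ncard)
    (hNclose : ∀ p i, ∀ r ∈ N p i, ∀ x : EuclideanSpace ℝ (Fin d),
      x ∈ S → x ≠ ↑p → x - ↑p ∈ cone i → x ∉ N p i →
      |⟪r - ↑p, u i⟫| ≤ |⟪x - ↑p, u i⟫|)
    -- the graph Θ(θ, 2f+1)
    (Θ : SimpleGraph (Pts S))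
    (hΘ : ∀ x y : Pts S, Θ.Adj x y ↔ x ≠ y ∧ ∃ i, (↑y ∈ N x i ∨ ↑x ∈ N y i))
    (ε : ℝ) (hε : 0 < ε) (hθε : 1 / (Real.cos θ - Real.sin θ) ≤ 1 + ε) :
    Θ.edgeSet.ncard ≤ k * ((2 * f + 1) * S.card) ∧
    ∀ F : Set (Sym2 (Pts S)), F ⊆ Θ.edgeSet → maxDegLe F f →
      ∀ p q : Pts S, gdist (Θ.deleteEdges F) p q ≤
        (1 + ε) * gdist ((⊤ : SimpleGraph (Pts S)).deleteEdges F) p q := by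
  classical
  have hπ : (0:ℝ) < π := Real.pi_pos
  have hcs : 0 < Real.cos θ - Real.sin θ := by
    have h1 : Real.sin θ < Real.sin (π / 2 - θ) := by
      apply Real.sin_lt_sin_of_lt_of_le_pi_div_two (by linarith) (by linarith) (by linarith)
    rw [Real.sin_pi_div_two_sub] at h1
    linarith
  set c : ℝ := Real.cos θ - Real.sin θ with hcdef
  have h1ε : (0:ℝ) < 1 + ε := by linarith
  have hone : 1 ≤ (1 + ε) * c := by
    rw [div_le_iff₀ hcs] at hθε
    linarith [hθε]
  have hune : ∀ i, u i ≠ 0 := by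
    intro i h
    have := hu i
    rw [h] at this; simp at this
  have huc : ∀ i, u i ∈ cone i := by
    intro i
    have := hray i 1 zero_le_one
    rwa [one_smul] at this
  constructor
  · -- edge count
    set E : Pts S × Fin k → Set (Sym2 (Pts S)) :=
      fun pi => (fun r : Pts S => s(pi.1, r)) '' {r : Pts S | ↑r ∈ N pi.1 pi.2} with hE
    have hsub : Θ.edgeSet ⊆ ⋃ pi, E pi := by
      intro e he
      induction e using Sym2.ind with
      | _ x y =>
        rw [SimpleGraph.mem_edgeSet, hΘ] at he
        obtain ⟨hne, i, hcase⟩ := he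
        rcases hcase with h | h
        · exact Set.mem_iUnion.2 ⟨(x, i), ⟨y, h, rfl⟩⟩
        · refine Set.mem_iUnion.2 ⟨(y, i), ⟨x, h, ?_⟩⟩
          exact Sym2.eq_swap
    have hEcard : ∀ pi, (E pi).ncard ≤ 2 * f + 1 := by
      intro pi
      have h1 : (E pi).ncard ≤ {r : Pts S | ↑r ∈ N pi.1 pi.2}.ncard :=
        Set.ncard_image_le (Set.toFinite _)
      have h2 : {r : Pts S | ↑r ∈ N pi.1 pi.2}.ncard ≤ (N pi.1 pi.2).ncard :=
        Set.ncard_le_ncard_of_injOn (fun r : Pts S => (r : EuclideanSpace ℝ (Fin d)))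
          (fun r hr => hr) (fun r1 _ r2 _ h => Subtype.ext h)
          (Set.Finite.subset S.finite_toSet (fun x hx => (hNsub pi.1 pi.2 hx).1))
      have h3 : (N pi.1 pi.2).ncard ≤ 2 * f + 1 := by
        rw [hNcard]; exact min_le_left _ _
      omega
    calc Θ.edgeSet.ncard ≤ (⋃ pi, E pi).ncard :=
          Set.ncard_le_ncard hsub (Set.toFinite _)
      _ ≤ ∑ pi : Pts S × Fin k, (E pi).ncard := by
          have hfin : ∀ pi, (E pi).Finite := fun pi => Set.toFinite _
          have hset : (⋃ pi, E pi) ⊆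
              ↑(Finset.univ.biUnion (fun pi => (hfin pi).toFinset)) := by
            intro e he
            rw [Set.mem_iUnion] at he
            obtain ⟨pi, hpi⟩ := he
            simp only [Finset.coe_biUnion, Finset.mem_coe, Finset.mem_univ,
              Set.mem_iUnion, Set.Finite.coe_toFinset, Set.iUnion_true]
            exact ⟨pi, hpi⟩
          calc (⋃ pi, E pi).ncard
              ≤ (Finset.univ.biUnion (fun pi => (hfin pi).toFinset)).card := by
                rw [← Set.ncard_coe_finset]
                exact Set.ncard_le_ncard hset (Set.toFinite _)
            _ ≤ ∑ pi, ((hfin pi).toFinset).card := Finset.card_biUnion_le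
            _ = ∑ pi, (E pi).ncard := by
                refine Finset.sum_congr rfl (fun pi _ => ?_)
                rw [Set.ncard_eq_toFinset_card]
      _ ≤ ∑ _pi : Pts S × Fin k, (2 * f + 1) := Finset.sum_le_sum (fun pi _ => hEcard pi)
      _ = k * ((2 * f + 1) * S.card) := by
          rw [Finset.sum_const, Finset.card_univ]
          simp [Fintype.card_prod, Fintype.card_coe]
          ring
  · -- spanner
    intro F hF hdeg
    -- the measure
    set m : Pts S → Pts S → ℕ := fun p q =>
      (Finset.univ.filter (fun ab : Pts S × Pts S => dist ab.1 ab.2 < dist p q)).card with hm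
    have claim : ∀ n : ℕ, ∀ p q : Pts S, m p q ≤ n → s(p, q) ∉ F →
        ∃ w : (Θ.deleteEdges F).Walk p q, wlen w ≤ (1 + ε) * dist p q := by
      intro n
      induction n using Nat.strong_induction_on with
      | _ n IH =>
        intro p q hmn hpqF
        by_cases hpq : p = q
        · subst hpq
          exact ⟨SimpleGraph.Walk.nil, by rw [wlen_nil, dist_self]; simp⟩
        have hqp : (q : EuclideanSpace ℝ (Fin d)) ≠ ↑p := fun h => hpq (Subtype.ext h).symm
        have hqp0 : (↑q - ↑p : EuclideanSpace ℝ (Fin d)) ≠ 0 := sub_ne_zero.2 hqp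
        obtain ⟨i, hi⟩ := hcover (↑q - ↑p)
        by_cases hqN : (↑q : EuclideanSpace ℝ (Fin d)) ∈ N p i
        · have hadj : (Θ.deleteEdges F).Adj p q := by
            rw [SimpleGraph.deleteEdges_adj]
            exact ⟨(hΘ p q).2 ⟨hpq, i, Or.inl hqN⟩, hpqF⟩
          refine ⟨hadj.toWalk, ?_⟩
          rw [SimpleGraph.Adj.toWalk, wlen_cons, wlen_nil]
          nlinarith [dist_nonneg (x := p) (y := q)]
        · -- recursive case
          set Spc : Set (EuclideanSpace ℝ (Fin d)) :=
            {x | x ∈ S ∧ x ≠ ↑p ∧ x - ↑p ∈ cone i} with hSpc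
          have hSpcfin : Spc.Finite :=
            Set.Finite.subset S.finite_toSet (fun x hx => hx.1)
          have hqSpc : (↑q : EuclideanSpace ℝ (Fin d)) ∈ Spc := ⟨q.2, hqp, hi⟩
          have hN21 : (N p i).ncard = 2 * f + 1 := by
            rcases le_or_gt (2 * f + 1) Spc.ncard with h | h
            · rw [hNcard]; exact min_eq_left h
            · exfalso
              have heq : N p i = Spc := by
                apply Set.eq_of_subset_of_ncard_le (hNsub p i) _ hSpcfin
                rw [hNcard, min_eq_right h.le]
              rw [heq] at hqN; exact hqN hqSpc
          set NP : Set (Pts S) := {r : Pts S | ↑r ∈ N p i} with hNP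
          have hNPcard : NP.ncard = 2 * f + 1 := by
            rw [← hN21]
            have himg : (fun r : Pts S => (r : EuclideanSpace ℝ (Fin d))) '' NP = N p i := by
              ext x
              constructor
              · rintro ⟨r, hr, rfl⟩; exact hr
              · intro hx; exact ⟨⟨x, (hNsub p i hx).1⟩, hx, rfl⟩
            rw [← himg]
            exact (Set.ncard_image_of_injective _ Subtype.coe_injective).symm
          set B1 : Set (Pts S) := {r ∈ NP | s(p, r) ∈ F} with hB1def
          set B2 : Set (Pts S) := {r ∈ NP | s(r, q) ∈ F} with hB2def
          have hbadcard : ∀ (v : Pts S) (B : Set (Pts S)) (φ : Pts S → Sym2 (Pts S)),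
              (∀ r ∈ B, φ r ∈ F ∧ v ∈ φ r) → Set.InjOn φ B → B.ncard ≤ f := by
            intro v B φ hmap hinj
            have hBe : B.encard ≤ (f : ℕ∞) := by
              calc B.encard = (φ '' B).encard := (hinj.encard_image).symm
                _ ≤ {e | e ∈ F ∧ v ∈ e}.encard := by
                    apply Set.encard_le_encard
                    rintro e ⟨r, hr, rfl⟩
                    exact hmap r hr
                _ ≤ (f : ℕ∞) := hdeg v
            exact (Set.encard_le_coe_iff_finite_ncard_le.mp hBe).2
          have hB1card : B1.ncard ≤ f := by
            apply hbadcard p B1 (fun r => s(p, r))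
            · intro r hr; exact ⟨hr.2, Sym2.mem_mk_left _ _⟩
            · intro r1 _ r2 _ h; exact Sym2.congr_right.mp h
          have hB2card : B2.ncard ≤ f := by
            apply hbadcard q B2 (fun r => s(r, q))
            · intro r hr; exact ⟨hr.2, Sym2.mem_mk_right _ _⟩
            · intro r1 _ r2 _ h; exact Sym2.congr_left.mp h
          have hex : ∃ r ∈ NP, r ∉ B1 ∪ B2 := by
            by_contra hcon
            push_neg at hcon
            have hsub2 : NP ⊆ B1 ∪ B2 := fun r hr => hcon r hr
            have := Set.ncard_le_ncard hsub2 ((Set.toFinite B1).union (Set.toFinite B2))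
            have := Set.ncard_union_le B1 B2
            omega
          obtain ⟨r, hrNP, hrB⟩ := hex
          have hr1 : s(p, r) ∉ F := fun h => hrB (Or.inl ⟨hrNP, h⟩)
          have hr2 : s(r, q) ∉ F := fun h => hrB (Or.inr ⟨hrNP, h⟩)
          have hrN : (↑r : EuclideanSpace ℝ (Fin d)) ∈ N p i := hrNP
          obtain ⟨-, hrp, hrcone⟩ := hNsub p i hrN
          have hrp0 : (↑r - ↑p : EuclideanSpace ℝ (Fin d)) ≠ 0 := sub_ne_zero.2 hrp
          have hrq : r ≠ q := by
            intro h; subst h; exact hqN hrN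
          have hgeom : ‖(↑q - ↑p : EuclideanSpace ℝ (Fin d)) - (↑r - ↑p)‖ ≤
              ‖(↑q - ↑p : EuclideanSpace ℝ (Fin d))‖ - c * ‖(↑r - ↑p : EuclideanSpace ℝ (Fin d))‖ := by
            apply theta_geom hθ0 hθ1 (hu i) hrp0 hqp0
            · exact hang i _ hrcone hrp0 (u i) (huc i) (hune i)
            · exact hang i _ hi hqp0 (u i) (huc i) (hune i)
            · exact hang i _ hrcone hrp0 _ hi hqp0
            · exact hNclose p i _ hrN ↑q q.2 hqp hi hqN
          rw [sub_sub_sub_cancel_right] at hgeom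
          have hdrq : dist r q = ‖(↑q - ↑r : EuclideanSpace ℝ (Fin d))‖ := by
            rw [Subtype.dist_eq, dist_eq_norm, norm_sub_rev]
          have hdpq : dist p q = ‖(↑q - ↑p : EuclideanSpace ℝ (Fin d))‖ := by
            rw [Subtype.dist_eq, dist_eq_norm, norm_sub_rev]
          have hdpr : dist p r = ‖(↑r - ↑p : EuclideanSpace ℝ (Fin d))‖ := by
            rw [Subtype.dist_eq, dist_eq_norm, norm_sub_rev]
          have hnrp : 0 < ‖(↑r - ↑p : EuclideanSpace ℝ (Fin d))‖ := norm_pos_iff.2 hrp0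
          have hdlt : dist r q < dist p q := by
            rw [hdrq, hdpq]
            nlinarith
          have hmlt : m r q < m p q := by
            apply Finset.card_lt_card
            rw [Finset.ssubset_iff_of_subset]
            · exact ⟨(r, q), by simp [hdlt], by simp⟩
            · intro ab hab
              simp only [Finset.mem_filter, Finset.mem_univ, true_and] at hab ⊢
              linarith
          obtain ⟨w₂, hw₂⟩ := IH (m r q) (lt_of_lt_of_le hmlt hmn) r q le_rfl hr2
          have hadj : (Θ.deleteEdges F).Adj p r := by
            rw [SimpleGraph.deleteEdges_adj]
            refine ⟨(hΘ p r).2 ⟨?_, i, Or.inl hrN⟩, hr1⟩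
            intro h; subst h; exact hrp rfl
          refine ⟨SimpleGraph.Walk.cons hadj w₂, ?_⟩
          rw [wlen_cons]
          have hkey : dist r q ≤ dist p q - c * dist p r := by
            rw [hdrq, hdpq, hdpr]; linarith
          nlinarith [dist_nonneg (x := p) (y := r), hw₂]
    -- walk transfer
    intro p q
    have hmono : Θ.deleteEdges F ≤ (⊤ : SimpleGraph (Pts S)).deleteEdges F := by
      intro a b hab
      rw [SimpleGraph.deleteEdges_adj] at hab ⊢
      exact ⟨hab.1.ne, hab.2⟩
    by_cases hWex : Nonempty (((⊤ : SimpleGraph (Pts S)).deleteEdges F).Walk p q)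
    · have hW : ∀ {a b : Pts S} (w : ((⊤ : SimpleGraph (Pts S)).deleteEdges F).Walk a b),
          ∃ w' : (Θ.deleteEdges F).Walk a b, wlen w' ≤ (1 + ε) * wlen w := by
        intro a b w
        induction w with
        | nil => exact ⟨SimpleGraph.Walk.nil, by rw [wlen_nil, wlen_nil]; simp⟩
        | @cons x y z h w ih =>
          obtain ⟨w₂, hw₂⟩ := ih
          rw [SimpleGraph.deleteEdges_adj, SimpleGraph.top_adj] at h
          obtain ⟨w₁, hw₁⟩ := claim (m x y) x y le_rfl h.2
          refine ⟨w₁.append w₂, ?_⟩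
          rw [wlen_append, wlen_cons]
          have heq : (1 + ε) * (dist x y + wlen w) =
              (1 + ε) * dist x y + (1 + ε) * wlen w := by ring
          rw [heq]
          exact add_le_add hw₁ hw₂
      obtain ⟨w0⟩ := hWex
      have hWne : {l : ℝ | ∃ w : ((⊤ : SimpleGraph (Pts S)).deleteEdges F).Walk p q,
          wlen w = l}.Nonempty := ⟨wlen w0, w0, rfl⟩
      have hlb : gdist (Θ.deleteEdges F) p q / (1 + ε) ≤
          gdist ((⊤ : SimpleGraph (Pts S)).deleteEdges F) p q := by
        apply le_csInf hWne
        rintro l ⟨w, rfl⟩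
        rw [div_le_iff₀ h1ε]
        obtain ⟨w', hw'⟩ := hW w
        calc gdist (Θ.deleteEdges F) p q ≤ wlen w' := gdist_le_wlen w'
          _ ≤ (1 + ε) * wlen w := hw'
          _ = wlen w * (1 + ε) := by ring
      rw [div_le_iff₀ h1ε] at hlb
      linarith
    · have hempty : {l : ℝ | ∃ w : ((⊤ : SimpleGraph (Pts S)).deleteEdges F).Walk p q,
          wlen w = l} = ∅ := by
        rw [Set.eq_empty_iff_forall_notMem]
        rintro l ⟨w, -⟩
        exact hWex ⟨w⟩
      have hempty2 : {l : ℝ | ∃ w : (Θ.deleteEdges F).Walk p q, wlen w = l} = ∅ := by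
        rw [Set.eq_empty_iff_forall_notMem]
        rintro l ⟨w, -⟩
        exact hWex ⟨w.mapLe hmono⟩
      rw [gdist, gdist, hempty, hempty2, Real.sInf_empty]
      simp
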